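/- arXiv:0804.3172 — 2 statements merged into one kernel-verified Lean document; each statement's English description precedes it below -/
import Mathlib

section
/- Let F be a Keller map and let A_F be its non-proper value set. Then the restriction of F, as a map from ℂ² \ F⁻¹(A_F) (with the subspace topology) to ℂ² \ A_F (with the subspace topology), is a covering map. -/
open MvPolynomial Filter

/-- Evaluation of a bivariate polynomial at a point of `ℂ × ℂ`. -/
noncomputable def evalPoly (P : MvPolynomial (Fin 2) ℂ) (p : ℂ × ℂ) : ℂ :=
  MvPolynomial.eval ![p.1, p.2] P

/-- The polynomial map `ℂ² → ℂ²` given by a pair of polynomials. -/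
noncomputable def polyMap (P Q : MvPolynomial (Fin 2) ℂ) (p : ℂ × ℂ) : ℂ × ℂ :=
  (evalPoly P p, evalPoly Q p)

/-- `(P, Q)` is a Keller map: the Jacobian determinant is a nonzero constant. -/
def IsKeller (P Q : MvPolynomial (Fin 2) ℂ) : Prop :=
  ∃ c : ℂ, c ≠ 0 ∧
    pderiv 0 P * pderiv 1 Q - pderiv 1 P * pderiv 0 Q = MvPolynomial.C c

/-- `P` is a rational polynomial: away from finitely many values `c`, the fiber
`P = c` is homeomorphic to `ℂ` minus a finite set of points. -/
def IsRationalPoly (P : MvPolynomial (Fin 2) ℂ) : Prop :=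
  ∃ S : Finset ℂ, ∀ c ∉ S, ∃ T : Finset ℂ,
    Nonempty ({p : ℂ × ℂ // evalPoly P p = c} ≃ₜ {z : ℂ // z ∉ T})

/-- The polynomial map `(P, Q)` has a polynomial inverse. -/
def IsInvertible (P Q : MvPolynomial (Fin 2) ℂ) : Prop :=
  ∃ A B : MvPolynomial (Fin 2) ℂ,
    polyMap A B ∘ polyMap P Q = id ∧ polyMap P Q ∘ polyMap A B = id

/-- The non-proper value set of a map `F : ℂ² → ℂ²`. -/
def nonProperSet (F : ℂ × ℂ → ℂ × ℂ) : Set (ℂ × ℂ) :=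
  {a | ∃ b : ℕ → ℂ × ℂ,
    Tendsto (fun i => ‖b i‖) atTop atTop ∧ Tendsto (fun i => F (b i)) atTop (nhds a)}

/-!
By the inverse function theorem the Jacobian condition makes `F` a local homeomorphism. The set
`A_F` is closed, and off it `F` is proper: if `K` is compact and disjoint from `A_F`, an unbounded
sequence in `F⁻¹(K)` would, after passing to a subsequence along which its image converges in `K`,
exhibit a point of `K ∩ A_F`. A proper local homeomorphism has finite fibres and is a closed map,
hence is a covering map.
-/

open Topology

theorem MvPolynomial.hasStrictFDerivAt_eval {𝕜 σ : Type*} [NontriviallyNormedField 𝕜]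
    [Fintype σ] (p : MvPolynomial σ 𝕜) (x : σ → 𝕜) :
    HasStrictFDerivAt (fun y => eval y p)
      (∑ i, eval x (pderiv i p) • (ContinuousLinearMap.proj i : (σ → 𝕜) →L[𝕜] 𝕜)) x := by
  classical
  induction p using MvPolynomial.induction_on with
  | C a =>
    refine (hasStrictFDerivAt_const a x).congr_of_eventuallyEq
      (.of_forall fun y => by simp) |>.congr_fderiv ?_
    ext v
    simp
  | add p q hp hq =>
    refine (hp.add hq).congr_of_eventuallyEq (.of_forall fun y => by simp) |>.congr_fderiv ?_
    ext v
    simp [Finset.sum_add_distrib, add_mul]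
  | mul_X p i hp =>
    refine (hp.mul (hasStrictFDerivAt_apply i x)).congr_of_eventuallyEq
      (.of_forall fun y => by simp) |>.congr_fderiv ?_
    ext v
    simp [pderiv_X, Pi.single_apply, Finset.sum_add_distrib, add_mul, apply_ite, Finset.mul_sum,
      mul_assoc]

theorem isLocalHomeomorph_of_hasStrictFDerivAt_of_injective {𝕜 E : Type*}
    [NontriviallyNormedField 𝕜] [CompleteSpace 𝕜] [NormedAddCommGroup E] [NormedSpace 𝕜 E]
    [FiniteDimensional 𝕜 E] {f : E → E} {f' : E → E →L[𝕜] E}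
    (hf : ∀ x, HasStrictFDerivAt f (f' x) x) (hf' : ∀ x, Function.Injective (f' x)) :
    IsLocalHomeomorph f := by
  intro x
  have : CompleteSpace E := FiniteDimensional.complete 𝕜 E
  let e := (LinearEquiv.ofInjectiveEndo (f' x : E →ₗ[𝕜] E) (hf' x)).toContinuousLinearEquiv
  have he : HasStrictFDerivAt f (e : E →L[𝕜] E) x := hf x
  exact ⟨he.toOpenPartialHomeomorph f, he.mem_toOpenPartialHomeomorph_source,
    he.toOpenPartialHomeomorph_coe.symm⟩

theorem eq_zero_and_eq_zero_of_det_ne_zero {R : Type*} [CommRing R] [IsDomain R]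
    {a b c d u v : R} (hdet : a * d - b * c ≠ 0) (h₁ : a * u + b * v = 0)
    (h₂ : c * u + d * v = 0) : u = 0 ∧ v = 0 := by
  have hu : (a * d - b * c) * u = 0 := by linear_combination d * h₁ - b * h₂
  have hv : (a * d - b * c) * v = 0 := by linear_combination a * h₂ - c * h₁
  exact ⟨(mul_eq_zero.1 hu).resolve_left hdet, (mul_eq_zero.1 hv).resolve_left hdet⟩

theorem IsKeller.isLocalHomeomorph {P Q : MvPolynomial (Fin 2) ℂ} (hK : IsKeller P Q) :
    IsLocalHomeomorph (polyMap P Q) := by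
  obtain ⟨c, hc, hJ⟩ := hK
  let e := (ContinuousLinearEquiv.finTwoArrow ℂ ℂ).symm
  have hD (R : MvPolynomial (Fin 2) ℂ) (z : ℂ × ℂ) :=
    (hasStrictFDerivAt_eval R (e z)).comp z e.hasStrictFDerivAt
  refine isLocalHomeomorph_of_hasStrictFDerivAt_of_injective
    (fun z => (hD P z).prodMk (hD Q z)) fun z => (injective_iff_map_eq_zero _).2 fun w hw => ?_
  have hdet := congrArg (eval (e z)) hJ
  rw [map_sub, map_mul, map_mul, eval_C] at hdet
  simp only [Fin.sum_univ_two, ContinuousLinearMap.add_comp, ContinuousLinearMap.smul_comp,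
    ContinuousLinearMap.prod_apply, add_apply, smul_apply, ContinuousLinearMap.comp_apply,
    ContinuousLinearEquiv.coe_coe, ContinuousLinearMap.proj_apply, smul_eq_mul, Prod.ext_iff,
    Prod.fst_zero, Prod.snd_zero] at hw
  obtain ⟨h₁, h₂⟩ := eq_zero_and_eq_zero_of_det_ne_zero (hdet ▸ hc) hw.1 hw.2
  exact Prod.ext h₁ h₂

theorem IsLocalHomeomorph.restrictPreimage {X Y : Type*} [TopologicalSpace X]
    [TopologicalSpace Y] {f : X → Y} (hf : IsLocalHomeomorph f) {s : Set Y} (hs : IsOpen s) :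
    IsLocalHomeomorph (s.restrictPreimage f) :=
  .of_comp (hf.comp (hs.preimage hf.continuous).isOpenEmbedding_subtypeVal.isLocalHomeomorph)
    hs.isOpenEmbedding_subtypeVal.isLocalHomeomorph hf.continuous.restrictPreimage

theorem IsProperMap.isCoveringMap_of_isLocalHomeomorph {E X : Type*} [TopologicalSpace E]
    [TopologicalSpace X] [T2Space E] {f : E → X} (hp : IsProperMap f)
    (hl : IsLocalHomeomorph f) : IsCoveringMap f := by
  rw [isCoveringMap_iff_isCoveringMapOn_univ]
  refine hp.isClosedMap.isCoveringMapOn_of_isLocalHomeomorphOn (fun x _ =>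
    (hp.isCompact_preimage isCompact_singleton).finite
      (.of_openPartialHomeomorph f subset_rfl fun e _ =>
        let ⟨φ, he, hφ⟩ := hl e; ⟨φ, he, hφ.symm⟩)) ?_
  simpa using hl.isLocalHomeomorphOn

theorem isProperMap_restrictPreimage_of_isCompact_preimage {X Y : Type*} [TopologicalSpace X]
    [TopologicalSpace Y] [T2Space Y] [FirstCountableTopology Y] {f : X → Y} (hf : Continuous f)
    {s : Set Y} (h : ∀ K, K ⊆ s → IsCompact K → IsCompact (f ⁻¹' K)) :
    IsProperMap (s.restrictPreimage f) := by
  refine isProperMap_iff_isCompact_preimage.2 ⟨hf.restrictPreimage, fun K hK => ?_⟩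
  rw [IsEmbedding.subtypeVal.isCompact_iff, Set.image_val_preimage_restrictPreimage]
  exact h _ (Subtype.coe_image_subset s K) (hK.image continuous_subtype_val)

theorem mem_nonProperSet_iff {F : ℂ × ℂ → ℂ × ℂ} {a : ℂ × ℂ} :
    a ∈ nonProperSet F ↔ ∀ R : ℝ, ∀ ε > 0, ∃ b, R ≤ ‖b‖ ∧ dist (F b) a < ε := by
  constructor
  · rintro ⟨b, hb, hFb⟩ R ε hε
    obtain ⟨i, hi⟩ := ((hb.eventually_ge_atTop R).and (Metric.tendsto_nhds.1 hFb ε hε)).exists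
    exact ⟨b i, hi⟩
  · intro h
    choose b hb hFb using fun n : ℕ => h n (1 / (n + 1)) Nat.one_div_pos_of_nat
    refine ⟨b, tendsto_atTop_mono hb tendsto_natCast_atTop_atTop, ?_⟩
    exact tendsto_iff_dist_tendsto_zero.2 <| squeeze_zero (fun _ => dist_nonneg)
      (fun n => (hFb n).le) tendsto_one_div_add_atTop_nhds_zero_nat

theorem isClosed_nonProperSet (F : ℂ × ℂ → ℂ × ℂ) : IsClosed (nonProperSet F) := by
  refine isClosed_of_closure_subset fun a ha => mem_nonProperSet_iff.2 fun R ε hε => ?_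
  obtain ⟨a', ha', haa'⟩ := Metric.mem_closure_iff.1 ha (ε / 2) (half_pos hε)
  obtain ⟨b, hbR, hb⟩ := mem_nonProperSet_iff.1 ha' R (ε / 2) (half_pos hε)
  refine ⟨b, hbR, ?_⟩
  calc dist (F b) a ≤ dist (F b) a' + dist a' a := dist_triangle _ _ _
    _ < ε / 2 + ε / 2 := by rw [dist_comm a' a]; gcongr
    _ = ε := add_halves ε

theorem isCompact_preimage_of_subset_compl_nonProperSet {F : ℂ × ℂ → ℂ × ℂ} (hF : Continuous F)
    {K : Set (ℂ × ℂ)} (hKA : K ⊆ (nonProperSet F)ᶜ) (hK : IsCompact K) :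
    IsCompact (F ⁻¹' K) := by
  refine Metric.isCompact_of_isClosed_isBounded (hK.isClosed.preimage hF) ?_
  by_contra hunb
  have hz (n : ℕ) : ∃ z ∈ F ⁻¹' K, (n : ℝ) ≤ ‖z‖ := by
    by_contra! hn
    exact hunb (isBounded_iff_forall_norm_le.2 ⟨n, fun z hz => (hn z hz).le⟩)
  choose z hzK hzn using hz
  obtain ⟨a, haK, φ, hφ, hFa⟩ := hK.tendsto_subseq hzK
  refine hKA haK ⟨z ∘ φ, tendsto_atTop_mono (fun n => ?_) tendsto_natCast_atTop_atTop, hFa⟩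
  exact (Nat.cast_le.2 hφ.le_apply).trans (hzn (φ n))

/-- for a Keller map `F`, the restriction
`F : ℂ² \\ F⁻¹(A_F) → ℂ² \\ A_F` is a covering map. -/
theorem keller_covering_off_nonProperSet
    (P Q : MvPolynomial (Fin 2) ℂ) (hK : IsKeller P Q) :
    IsCoveringMap
      (fun p : (polyMap P Q ⁻¹' (nonProperSet (polyMap P Q))ᶜ : Set (ℂ × ℂ)) =>
        (⟨polyMap P Q p.1, p.2⟩ : ((nonProperSet (polyMap P Q))ᶜ : Set (ℂ × ℂ)))) := by
  have hF := hK.isLocalHomeomorph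
  have hproper := isProperMap_restrictPreimage_of_isCompact_preimage hF.continuous
    fun _ => isCompact_preimage_of_subset_compl_nonProperSet hF.continuous
  exact hproper.isCoveringMap_of_isLocalHomeomorph
    (hF.restrictPreimage (isClosed_nonProperSet _).isOpen_compl)
end

section
/- Let P, Q ∈ ℂ[x,y] with J(P,Q) := P_x Q_y − P_y Q_x a nonzero constant, and suppose deg P = deg Q = n with n ≥ 2. Then there exists a nonzero constant c ∈ ℂ such that P₊ = c·Q₊, where P₊ and Q₊ denote the homogeneous components of P and Q of degree n. -/
open MvPolynomial Filter

/-!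
Write `F = P₊` and `G = Q₊`. Each partial derivative lowers degree by one, so the component of
degree `2n - 2` of `J(P, Q)` is `J(F, G)`; as `J(P, Q)` is constant and `2n - 2 > 0`, `J(F, G) = 0`.
By Euler's identity `x F_x + y F_y = n F`, setting `y = 1` turns this into the vanishing of the
Wronskian of `f = F(x, 1)` and `g = G(x, 1)`. Dividing out `gcd(f, g)` leaves coprime polynomials
with zero Wronskian, which are constants; hence `f = c g`, and homogenizing gives `F = c G`.
-/

namespace Polynomial

variable {K : Type*} [Field K]

theorem wronskian_mul_left_mul_left (d a b : K[X]) :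
    wronskian (d * a) (d * b) = d ^ 2 * wronskian a b := by
  simp only [wronskian, derivative_mul]
  ring

theorem exists_eq_C_mul_of_wronskian_eq_zero [CharZero K] {f g : K[X]} (hg : g ≠ 0)
    (hw : wronskian f g = 0) : ∃ c, f = C c * g := by
  classical
  obtain ⟨a, b, hfa, hgb, hab⟩ := extract_gcd f g
  have hd : gcd f g ≠ 0 := mt (gcd_eq_zero_iff f g).mp (fun h => hg h.2)
  generalize gcd f g = d at hfa hgb hd
  have hwab : wronskian a b = 0 := by
    rw [hfa, hgb, wronskian_mul_left_mul_left] at hw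
    exact (mul_eq_zero.mp hw).resolve_left (pow_ne_zero 2 hd)
  have hcop : IsCoprime a b := isRelPrime_iff_isCoprime.mp (gcd_isUnit_iff_isRelPrime.mp hab)
  obtain ⟨ha, hb⟩ := hcop.wronskian_eq_zero_iff.mp hwab
  rw [eq_C_of_derivative_eq_zero ha] at hfa
  rw [eq_C_of_derivative_eq_zero hb] at hgb
  have hb0 : b.coeff 0 ≠ 0 := fun h => hg (by rw [hgb, h, C_0, mul_zero])
  refine ⟨a.coeff 0 / b.coeff 0, ?_⟩
  rw [hfa, hgb, mul_left_comm, ← C_mul, div_mul_cancel₀ _ hb0]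

end Polynomial

namespace MvPolynomial

section HomogeneousComponent

variable {σ R : Type*} [CommSemiring R]

theorem degree_le_totalDegree {p : MvPolynomial σ R} {d : σ →₀ ℕ} (h : d ∈ p.support) :
    d.degree ≤ p.totalDegree :=
  le_totalDegree h

theorem totalDegree_pderiv_le {p : MvPolynomial σ R} {n : ℕ} (i : σ)
    (h : p.totalDegree ≤ n + 1) : (pderiv i p).totalDegree ≤ n := by
  refine Finset.sup_le fun d hd => show d.degree ≤ n from ?_
  rw [mem_support_iff, coeff_pderiv] at hd
  have := (degree_le_totalDegree (mem_support_iff.mpr (left_ne_zero_of_mul hd))).trans h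
  rw [map_add, Finsupp.degree_single] at this
  omega

theorem homogeneousComponent_pderiv (i : σ) (n : ℕ) (p : MvPolynomial σ R) :
    homogeneousComponent n (pderiv i p) = pderiv i (homogeneousComponent (n + 1) p) := by
  ext d
  simp only [coeff_homogeneousComponent, coeff_pderiv, map_add, Finsupp.degree_single,
    Nat.add_right_cancel_iff]
  split_ifs <;> simp

theorem homogeneousComponent_mul_of_totalDegree_le {p q : MvPolynomial σ R} {a b : ℕ}
    (hp : p.totalDegree ≤ a) (hq : q.totalDegree ≤ b) :
    homogeneousComponent (a + b) (p * q) =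
      homogeneousComponent a p * homogeneousComponent b q := by
  classical
  ext d
  rw [coeff_homogeneousComponent]
  split_ifs with hd
  · rw [coeff_mul, coeff_mul]
    refine Finset.sum_congr rfl fun x hx => ?_
    rw [Finset.HasAntidiagonal.mem_antidiagonal] at hx
    simp only [coeff_homogeneousComponent]
    by_cases hx1 : coeff x.1 p = 0
    · simp [hx1]
    by_cases hx2 : coeff x.2 q = 0
    · simp [hx2]
    have h1 := (degree_le_totalDegree (mem_support_iff.mpr hx1)).trans hp
    have h2 := (degree_le_totalDegree (mem_support_iff.mpr hx2)).trans hq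
    have : x.1.degree + x.2.degree = a + b := by rw [← map_add, hx, hd]
    rw [if_pos (by omega), if_pos (by omega)]
  · exact (((homogeneousComponent_isHomogeneous a p).mul
      (homogeneousComponent_isHomogeneous b q)).coeff_eq_zero hd).symm

theorem homogeneousComponent_totalDegree_ne_zero {p : MvPolynomial σ R} (hp : p ≠ 0) :
    homogeneousComponent p.totalDegree p ≠ 0 := by
  obtain ⟨d, hd, hdeg⟩ := Finset.exists_mem_eq_sup _ (support_nonempty.mpr hp) Finsupp.degree
  have hdeg : d.degree = p.totalDegree := hdeg.symm
  intro h
  have := congrArg (coeff d) h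
  rw [coeff_homogeneousComponent, if_pos hdeg, coeff_zero] at this
  exact mem_support_iff.mp hd this

end HomogeneousComponent

section Jacobian

variable {R : Type*} [CommRing R]

noncomputable def jacobian (P Q : MvPolynomial (Fin 2) R) : MvPolynomial (Fin 2) R :=
  pderiv 0 P * pderiv 1 Q - pderiv 1 P * pderiv 0 Q

theorem homogeneousComponent_jacobian {P Q : MvPolynomial (Fin 2) R} {n : ℕ}
    (hP : P.totalDegree ≤ n + 1) (hQ : Q.totalDegree ≤ n + 1) :
    homogeneousComponent (n + n) (jacobian P Q) =
      jacobian (homogeneousComponent (n + 1) P) (homogeneousComponent (n + 1) Q) := by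
  simp only [jacobian, map_sub, ← homogeneousComponent_pderiv,
    homogeneousComponent_mul_of_totalDegree_le (totalDegree_pderiv_le _ hP)
      (totalDegree_pderiv_le _ hQ)]

theorem jacobian_homogeneousComponent_eq_zero_of_jacobian_eq_C {P Q : MvPolynomial (Fin 2) R}
    {n : ℕ} {c : R} (hn : n ≠ 0) (hP : P.totalDegree ≤ n + 1) (hQ : Q.totalDegree ≤ n + 1)
    (h : jacobian P Q = C c) :
    jacobian (homogeneousComponent (n + 1) P) (homogeneousComponent (n + 1) Q) = 0 := by
  rw [← homogeneousComponent_jacobian hP hQ, h, homogeneousComponent_eq_zero]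
  rw [totalDegree_C]
  omega

end Jacobian

section Dehomogenization

open Polynomial (derivative wronskian)

noncomputable def dehomogenize {R : Type*} [CommSemiring R] :
    MvPolynomial (Fin 2) R →ₐ[R] Polynomial R :=
  aeval ![Polynomial.X, 1]

theorem dehomogenize_pderiv_zero {R : Type*} [CommSemiring R] (p : MvPolynomial (Fin 2) R) :
    dehomogenize (pderiv 0 p) = derivative (dehomogenize p) := by
  induction p using MvPolynomial.induction_on with
  | C a => simp [dehomogenize]
  | add p q hp hq => simp [hp, hq]
  | mul_X p i hp =>
    rw [pderiv_mul, map_add, map_mul, map_mul, map_mul, hp, Polynomial.derivative_mul]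
    fin_cases i <;> simp [dehomogenize]

variable {R : Type*} [CommRing R]

theorem IsHomogeneous.dehomogenize_pderiv_one {F : MvPolynomial (Fin 2) R} {n : ℕ}
    (hF : F.IsHomogeneous n) :
    dehomogenize (pderiv 1 F) =
      (n : Polynomial R) * dehomogenize F - Polynomial.X * derivative (dehomogenize F) := by
  have euler := congrArg dehomogenize hF.sum_X_mul_pderiv
  simp only [Fin.sum_univ_two, map_add, map_mul, map_nsmul, dehomogenize_pderiv_zero] at euler
  simp [dehomogenize] at euler ⊢
  linear_combination euler

theorem IsHomogeneous.wronskian_dehomogenize_eq_zero [IsDomain R] [CharZero R]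
    {F G : MvPolynomial (Fin 2) R} {n : ℕ} (hn : n ≠ 0) (hF : F.IsHomogeneous n)
    (hG : G.IsHomogeneous n) (h : jacobian F G = 0) :
    wronskian (dehomogenize F) (dehomogenize G) = 0 := by
  have hJ := congrArg dehomogenize h
  rw [jacobian, map_sub, map_mul, map_mul, dehomogenize_pderiv_zero, dehomogenize_pderiv_zero,
    hF.dehomogenize_pderiv_one, hG.dehomogenize_pderiv_one, map_zero] at hJ
  have : (n : Polynomial R) * wronskian (dehomogenize F) (dehomogenize G) = 0 := by
    rw [Polynomial.wronskian]
    linear_combination -hJ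
  exact (mul_eq_zero.mp this).resolve_left (by exact_mod_cast hn)

theorem IsHomogeneous.homogenize_dehomogenize {F : MvPolynomial (Fin 2) R} {n : ℕ}
    (hF : F.IsHomogeneous n) : (dehomogenize F).homogenize n = F :=
  Polynomial.homogenize_eq_of_isHomogeneous hF rfl

theorem IsHomogeneous.exists_eq_C_mul_of_jacobian_eq_zero {K : Type*} [Field K] [CharZero K]
    {F G : MvPolynomial (Fin 2) K} {n : ℕ} (hn : n ≠ 0) (hF : F.IsHomogeneous n)
    (hG : G.IsHomogeneous n) (hG₀ : G ≠ 0) (h : jacobian F G = 0) : ∃ c, F = C c * G := by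
  have hg : dehomogenize G ≠ 0 := fun h₀ => hG₀ (by
    rw [← hG.homogenize_dehomogenize, h₀, Polynomial.homogenize_zero])
  obtain ⟨c, hc⟩ := Polynomial.exists_eq_C_mul_of_wronskian_eq_zero hg
    (hF.wronskian_dehomogenize_eq_zero hn hG h)
  refine ⟨c, ?_⟩
  rw [← hF.homogenize_dehomogenize, hc, Polynomial.homogenize_C_mul, hG.homogenize_dehomogenize]

end Dehomogenization

end MvPolynomial

/-- if `J(P,Q)` is a nonzero constant and `deg P = deg Q = n ≥ 2`,
then the leading homogeneous components are proportional: `P₊ = c • Q₊`. -/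
theorem keller_equal_degree_leading_proportional
    (P Q : MvPolynomial (Fin 2) ℂ) (n : ℕ) (hn : 2 ≤ n)
    (hK : IsKeller P Q)
    (hP : P.totalDegree = n) (hQ : Q.totalDegree = n) :
    ∃ c : ℂ, c ≠ 0 ∧
      MvPolynomial.homogeneousComponent n P =
        MvPolynomial.C c * MvPolynomial.homogeneousComponent n Q := by
  obtain ⟨c₀, -, hJ⟩ := hK
  obtain ⟨m, rfl⟩ : ∃ m, n = m + 1 := ⟨n - 1, by omega⟩
  have hJ_lead := jacobian_homogeneousComponent_eq_zero_of_jacobian_eq_C (by omega) hP.le hQ.le hJ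
  have leading_ne_zero {R : MvPolynomial (Fin 2) ℂ} (hR : R.totalDegree = m + 1) :
      homogeneousComponent (m + 1) R ≠ 0 :=
    hR ▸ homogeneousComponent_totalDegree_ne_zero (by rintro rfl; simp at hR)
  obtain ⟨c, hc⟩ := (homogeneousComponent_isHomogeneous _ P).exists_eq_C_mul_of_jacobian_eq_zero
    m.succ_ne_zero (homogeneousComponent_isHomogeneous _ Q) (leading_ne_zero hQ) hJ_lead
  refine ⟨c, ?_, hc⟩
  rintro rfl
  exact leading_ne_zero hP (by rw [hc, C_0, zero_mul])
end
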